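/- Let C and Cᵢ⁰ be symmetric positive definite real 3×3 matrices with det Cᵢ⁰ = 1, let λ ≥ 0 and ε ≥ 0, and set C̄ := (det C)^{-1/3}·C, A := C̄^{-1/2}·(Cᵢ⁰ + λ·C̄)·C̄^{-1/2}, φ₀ := (det A)^{1/3}, φ := φ₀ − (tr A/(3φ₀))·ε. Then: (a) A is symmetric positive definite; (b) the matrix sqrt(φ²·I + 4ε·A) + φ·I is invertible; (c) X := 2·A·(sqrt(φ²·I + 4ε·A) + φ·I)⁻¹ is symmetric positive definite; and (d) the IFEBM output Cᵢ := (det(C^{1/2}·X·C^{1/2}))^{-1/3}·C^{1/2}·X·C^{1/2} is symmetric positive definite with det Cᵢ = 1. Hence the iteration-free update is well defined for every time step and exactly preserves the symmetry, positive definiteness and unimodularity of the internal variable. -/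

import Mathlib

/-!
Everything happens in the commutative algebra generated by the positive definite matrix
`A`: `sqrt(φ²·I + 4ε·A) + φ·I` and `X` are `s(A)` and `x ↦ 2x / s(x)` applied to `A` by
the continuous functional calculus, where `s(x) = √(φ² + 4εx) + φ`. On the spectrum of
`A`, which lies in `(0, ∞)`, `s` is positive: for `ε > 0` because `√(φ² + 4εx) > |φ|`,
and for `ε = 0` because then `φ = (det A)^{1/3} > 0`. Hence both matrices are positive
definite, and the output is the unimodular part of the congruence `C^{1/2} X C^{1/2}` of
a positive definite matrix.
-/

open Matrix

abbrev Mat := Matrix (Fin 3) (Fin 3) ℝ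

/-- The unimodular part of a matrix. -/
noncomputable def unimod (M : Mat) : Mat := (M.det ^ (-(1 : ℝ) / 3)) • M

/-- The unique positive semidefinite square root of a positive semidefinite matrix
(junk value `0` on matrices that are not positive semidefinite). -/
noncomputable def msqrt (M : Mat) : Mat := by
  classical exact if h : M.PosSemidef then
    (h.1.eigenvectorUnitary : Mat) * diagonal ((↑) ∘ Real.sqrt ∘ h.1.eigenvalues) *
      (star h.1.eigenvectorUnitary : Mat) else 0

/-- The matrix `A = C̄^{-1/2}·(Cᵢ⁰ + λ·C̄)·C̄^{-1/2}` of the IFEBM update. -/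
noncomputable def ifebmA (lam : ℝ) (C Ci : Mat) : Mat :=
  (msqrt (unimod C))⁻¹ * (Ci + lam • unimod C) * (msqrt (unimod C))⁻¹

/-- The scalar `φ = φ₀ − (tr A/(3φ₀))·ε` of the IFEBM update, `φ₀ = (det A)^{1/3}`. -/
noncomputable def ifebmPhi (lam eps : ℝ) (C Ci : Mat) : ℝ :=
  (ifebmA lam C Ci).det ^ ((1 : ℝ) / 3) -
    (ifebmA lam C Ci).trace / (3 * (ifebmA lam C Ci).det ^ ((1 : ℝ) / 3)) * eps

/-- The matrix `X = 2·A·(sqrt(φ²·I + 4ε·A) + φ·I)⁻¹` of the IFEBM update. -/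
noncomputable def ifebmX (lam eps : ℝ) (C Ci : Mat) : Mat :=
  (2 : ℝ) • ifebmA lam C Ci *
    (msqrt ((ifebmPhi lam eps C Ci) ^ 2 • (1 : Mat) + (4 * eps) • ifebmA lam C Ci) +
      (ifebmPhi lam eps C Ci) • (1 : Mat))⁻¹

/-- The IFEBM updated internal variable `Cᵢ = unimod (C^{1/2}·X·C^{1/2})`. -/
noncomputable def ifebmCi (lam eps : ℝ) (C Ci : Mat) : Mat :=
  unimod (msqrt C * ifebmX lam eps C Ci * msqrt C)

open scoped MatrixOrder ComplexOrder

lemma Matrix.PosDef.mul_mul_same {n 𝕜 : Type*} [Fintype n] [DecidableEq n] [RCLike 𝕜]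
    {A B : Matrix n n 𝕜} (hA : A.PosDef) (hB : B.PosDef) : (B * A * B).PosDef := by
  simpa [hB.1.eq] using hA.conjTranspose_mul_mul_same (mulVec_injective_of_isUnit hB.isUnit)

section FunctionalCalculus

variable {n : Type*} [Fintype n] [DecidableEq n] {A : Matrix n n ℝ}

lemma Matrix.PosDef.spectrum_pos (hA : A.PosDef) {x : ℝ} (hx : x ∈ spectrum ℝ A) : 0 < x := by
  rw [hA.1.spectrum_real_eq_range_eigenvalues] at hx
  obtain ⟨i, rfl⟩ := hx
  exact hA.eigenvalues_pos i

lemma Matrix.IsHermitian.posDef_cfc (hA : A.IsHermitian) {f : ℝ → ℝ}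
    (hf : ∀ x ∈ spectrum ℝ A, 0 < f x) : (cfc f A).PosDef := by
  have : ContinuousOn f (spectrum ℝ A) := finite_real_spectrum.continuousOn f
  refine (cfc_nonneg fun x hx => (hf x hx).le).posSemidef.posDef_iff_isUnit.mpr ?_
  exact (isUnit_cfc_iff f A).mpr fun x hx => (hf x hx).ne'

lemma Matrix.IsHermitian.smul_one_add_smul_eq_cfc (hA : A.IsHermitian) (a c : ℝ) :
    a • (1 : Matrix n n ℝ) + c • A = cfc (fun x => a + c * x) A := by
  rw [cfc_add .., cfc_const .., cfc_const_mul .., cfc_id' ..]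
  simp [Algebra.algebraMap_eq_smul_one]

lemma Matrix.IsHermitian.smul_mul_inv_cfc (hA : A.IsHermitian) (c : ℝ) {f : ℝ → ℝ}
    (hf : ∀ x ∈ spectrum ℝ A, f x ≠ 0) :
    c • A * (cfc f A)⁻¹ = cfc (fun x => c * x / f x) A := by
  have : ContinuousOn f (spectrum ℝ A) := finite_real_spectrum.continuousOn f
  simp_rw [div_eq_mul_inv]
  rw [nonsing_inv_eq_ringInverse, ← cfc_inv f A hf, cfc_mul .., cfc_const_mul .., cfc_id' ..]

end FunctionalCalculus

lemma Real.sqrt_sq_add_add_pos {a c : ℝ} (h : 0 < a ∨ 0 < c) :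
    0 < √(a ^ 2 + c) + a := by
  rcases h with ha | hc
  · have := Real.sqrt_nonneg (a ^ 2 + c)
    linarith
  · have : |a| < √(a ^ 2 + c) := by
      rw [← Real.sqrt_sq_eq_abs]
      exact Real.sqrt_lt_sqrt (sq_nonneg a) (by linarith)
    linarith [neg_le_abs a]

lemma msqrt_eq_cfc {M : Mat} (hM : M.PosSemidef) : msqrt M = cfc Real.sqrt M := by
  rw [msqrt, dif_pos hM, hM.1.cfc_eq, IsHermitian.cfc, Unitary.conjStarAlgAut_apply]
  rfl

lemma Matrix.PosDef.msqrt {M : Mat} (hM : M.PosDef) : (msqrt M).PosDef := by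
  rw [msqrt_eq_cfc hM.posSemidef]
  exact hM.1.posDef_cfc fun x hx => Real.sqrt_pos.mpr (hM.spectrum_pos hx)

lemma Matrix.PosDef.unimod {M : Mat} (hM : M.PosDef) : (unimod M).PosDef :=
  hM.smul (Real.rpow_pos_of_pos hM.det_pos _)

lemma det_unimod {M : Mat} (hM : 0 < M.det) : (unimod M).det = 1 := by
  rw [unimod, det_smul, Fintype.card_fin, ← Real.rpow_natCast, ← Real.rpow_mul hM.le]
  norm_num [Real.rpow_neg_one, hM.ne']

lemma msqrt_sq_smul_one_add_smul_add_smul_one_eq_cfc {A : Mat} (hA : A.PosSemidef) (a : ℝ)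
    {c : ℝ} (hc : 0 ≤ c) :
    msqrt (a ^ 2 • (1 : Mat) + c • A) + a • (1 : Mat) =
      cfc (fun x => √(a ^ 2 + c * x) + a) A := by
  have hpsd : (a ^ 2 • (1 : Mat) + c • A).PosSemidef :=
    (PosSemidef.one.smul (sq_nonneg a)).add (hA.smul hc)
  rw [msqrt_eq_cfc hpsd, hA.1.smul_one_add_smul_eq_cfc, ← cfc_comp' .., cfc_add .., cfc_const ..]
  simp [Algebra.algebraMap_eq_smul_one]

lemma posDef_ifebmA {C Ci : Mat} (hC : C.PosDef) (hCi : Ci.PosDef) {lam : ℝ} (hlam : 0 ≤ lam) :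
    (ifebmA lam C Ci).PosDef :=
  (hCi.add_posSemidef (hC.unimod.posSemidef.smul hlam)).mul_mul_same hC.unimod.msqrt.inv

lemma ifebmPhi_zero (lam : ℝ) (C Ci : Mat) :
    ifebmPhi lam 0 C Ci = (ifebmA lam C Ci).det ^ ((1 : ℝ) / 3) := by
  simp [ifebmPhi]

theorem ifebm_well_defined_general (C Ci0 : Mat) (hC : C.PosDef) (hCi0 : Ci0.PosDef)
    (lam eps : ℝ) (hlam : 0 ≤ lam) (heps : 0 ≤ eps) :
    (ifebmA lam C Ci0).PosDef ∧
      IsUnit (msqrt ((ifebmPhi lam eps C Ci0) ^ 2 • (1 : Mat) +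
          (4 * eps) • ifebmA lam C Ci0) + (ifebmPhi lam eps C Ci0) • (1 : Mat)) ∧
      (ifebmX lam eps C Ci0).PosDef ∧
      (ifebmCi lam eps C Ci0).PosDef ∧ (ifebmCi lam eps C Ci0).det = 1 := by
  have hA := posDef_ifebmA hC hCi0 hlam
  set A := ifebmA lam C Ci0
  set φ := ifebmPhi lam eps C Ci0
  have hs : ∀ x ∈ spectrum ℝ A, 0 < √(φ ^ 2 + 4 * eps * x) + φ := by
    intro x hx
    refine Real.sqrt_sq_add_add_pos ?_
    rcases heps.eq_or_lt with rfl | heps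
    · exact .inl (by simpa [φ, ifebmPhi_zero] using Real.rpow_pos_of_pos hA.det_pos _)
    · exact .inr (by positivity [hA.spectrum_pos hx])
  have hS := msqrt_sq_smul_one_add_smul_add_smul_one_eq_cfc hA.posSemidef φ
    (mul_nonneg zero_le_four heps)
  have hX : (ifebmX lam eps C Ci0).PosDef := by
    rw [ifebmX, hS, hA.1.smul_mul_inv_cfc 2 fun x hx => (hs x hx).ne']
    exact hA.1.posDef_cfc fun x hx => by have := hs x hx; positivity [hA.spectrum_pos hx]
  have hY := hX.mul_mul_same hC.msqrt
  exact ⟨hA, hS ▸ (hA.1.posDef_cfc hs).isUnit, hX, hY.unimod, det_unimod hY.det_pos⟩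

/-- the IFEBM update is well defined for every time step and exactly
preserves symmetry, positive definiteness and unimodularity of the internal variable:
(a) `A` is symmetric positive definite, (b) `sqrt(φ²·I + 4ε·A) + φ·I` is invertible,
(c) `X` is symmetric positive definite, (d) the output `Cᵢ` is symmetric positive
definite with `det Cᵢ = 1`. -/
theorem ifebm_well_defined (C Ci0 : Mat) (hC : C.PosDef) (hCi0 : Ci0.PosDef)
    (h1 : Ci0.det = 1) (lam eps : ℝ) (hlam : 0 ≤ lam) (heps : 0 ≤ eps) :
    (ifebmA lam C Ci0).PosDef ∧
      IsUnit (msqrt ((ifebmPhi lam eps C Ci0) ^ 2 • (1 : Mat) +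
          (4 * eps) • ifebmA lam C Ci0) + (ifebmPhi lam eps C Ci0) • (1 : Mat)) ∧
      (ifebmX lam eps C Ci0).PosDef ∧
      (ifebmCi lam eps C Ci0).PosDef ∧ (ifebmCi lam eps C Ci0).det = 1 :=
  ifebm_well_defined_general C Ci0 hC hCi0 lam eps hlam heps
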